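/- For a function f : [0,∞) → ℝ and c > 0, define the truncated variation TV^c(f,[0,t]) = sup over partitions 0 ≤ t_0 < ... < t_n ≤ t of ∑_{i=1}^n max(|f(t_i) − f(t_{i-1})| − c, 0). If g : [0,t] → ℝ satisfies sup_{s∈[0,t]} |g(s) − f(s)| ≤ c/2, then TV(g,[0,t]) ≥ TV^c(f,[0,t]). -/

import Mathlib

open scoped ENNReal
open Filter

/-- `u : Fin (n+1) → ℝ` is a partition `0 ≤ t₀ < t₁ < ... < tₙ ≤ t`. -/
def IsPartition (t : ℝ) {n : ℕ} (u : Fin (n + 1) → ℝ) : Prop :=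
  StrictMono u ∧ 0 ≤ u 0 ∧ u (Fin.last n) ≤ t

/-- The sum `∑ |h(tᵢ) − h(tᵢ₋₁)|^p` along a partition. -/
noncomputable def pVarSum (h : ℝ → ℝ) (p : ℝ) {n : ℕ} (u : Fin (n + 1) → ℝ) : ℝ :=
  ∑ i : Fin n, |h (u i.succ) - h (u i.castSucc)| ^ p

/-- The `p`-variation of `h` on `[0,t]`: the supremum over all partitions. -/
noncomputable def pVar (h : ℝ → ℝ) (p t : ℝ) : ℝ≥0∞ :=
  ⨆ (n : ℕ) (u : Fin (n + 1) → ℝ) (_ : IsPartition t u), ENNReal.ofReal (pVarSum h p u)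

/-- The truncated variation `TV^c(f,[0,t])`: the supremum over partitions of
`∑ max(|f(tᵢ) − f(tᵢ₋₁)| − c, 0)`. -/
noncomputable def truncVar (f : ℝ → ℝ) (c t : ℝ) : ℝ≥0∞ :=
  ⨆ (n : ℕ) (u : Fin (n + 1) → ℝ) (_ : IsPartition t u),
    ENNReal.ofReal (∑ i : Fin n, max (|f (u i.succ) - f (u i.castSucc)| - c) 0)

lemma IsPartition.mem_Icc {t : ℝ} {n : ℕ} {u : Fin (n + 1) → ℝ} (hu : IsPartition t u)
    (i : Fin (n + 1)) : u i ∈ Set.Icc 0 t :=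
  ⟨hu.2.1.trans (hu.1.monotone (Fin.zero_le i)), (hu.1.monotone (Fin.le_last i)).trans hu.2.2⟩

lemma pVarSum_one (h : ℝ → ℝ) {n : ℕ} (u : Fin (n + 1) → ℝ) :
    pVarSum h 1 u = ∑ i : Fin n, |h (u i.succ) - h (u i.castSucc)| := by
  simp only [pVarSum, Real.rpow_one]

lemma abs_sub_le_abs_sub_add_of_close {f g : ℝ → ℝ} {c x y : ℝ} (hx : |g x - f x| ≤ c / 2)
    (hy : |g y - f y| ≤ c / 2) : |f x - f y| ≤ |g x - g y| + c := by
  calc |f x - f y| = |(g x - g y) - (g x - f x) + (g y - f y)| := by congr 1; ring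
    _ ≤ |g x - g y| + |g x - f x| + |g y - f y| :=
      (abs_add_le _ _).trans (add_le_add_left (abs_sub _ _) _)
    _ ≤ |g x - g y| + c := by linarith

lemma truncVarSum_le_pVarSum_of_close {f g : ℝ → ℝ} {c t : ℝ}
    (hclose : ∀ s ∈ Set.Icc (0 : ℝ) t, |g s - f s| ≤ c / 2) {n : ℕ} {u : Fin (n + 1) → ℝ}
    (hu : IsPartition t u) :
    ∑ i : Fin n, max (|f (u i.succ) - f (u i.castSucc)| - c) 0 ≤ pVarSum g 1 u := by
  rw [pVarSum_one]
  refine Finset.sum_le_sum fun i _ => max_le ?_ (abs_nonneg _)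
  have := abs_sub_le_abs_sub_add_of_close (hclose _ (hu.mem_Icc i.succ))
    (hclose _ (hu.mem_Icc i.castSucc))
  linarith

theorem truncVar_le_TV_of_close_general (f g : ℝ → ℝ) (c t : ℝ)
    (hclose : ∀ s ∈ Set.Icc (0 : ℝ) t, |g s - f s| ≤ c / 2) :
    truncVar f c t ≤ pVar g 1 t :=
  iSup₂_mono fun _ _ => iSup_mono fun hu =>
    ENNReal.ofReal_le_ofReal (truncVarSum_le_pVarSum_of_close hclose hu)

/-- If `g` is uniformly within `c/2` of `f` on `[0,t]`, then the total variation of `g`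
dominates the truncated variation `TV^c(f,[0,t])`. -/
theorem truncVar_le_TV_of_close (f g : ℝ → ℝ) (c t : ℝ) (hc : 0 < c)
    (hclose : ∀ s ∈ Set.Icc (0 : ℝ) t, |g s - f s| ≤ c / 2) :
    truncVar f c t ≤ pVar g 1 t :=
  truncVar_le_TV_of_close_general f g c t hclose
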